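/- arXiv:1212.1257 — 3 statements merged into one kernel-verified Lean document; each statement's English description precedes it below -/
import Mathlib

section
/- Let T > 0, α ∈ (0,1], μ ≥ 0, and let a(t) = t^{α-1}/Γ(α) for t > 0, where Γ is the Gamma function. If s : [0,T] → ℝ is continuous and satisfies s(t) + μ ∫₀ᵗ ((t-τ)^{α-1}/Γ(α)) s(τ) dτ = 1 for all t ∈ [0,T], then s(t) ≥ 0 for all t ∈ [0,T]. -/
open MeasureTheory Set intervalIntegral

private lemma ker_intable {α : ℝ} (hα : 0 < α) (t a b : ℝ) :
    IntervalIntegrable (fun τ => (t - τ) ^ (α - 1)) volume a b := by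
  have h : IntervalIntegrable (fun x : ℝ => x ^ (α - 1)) volume (t - a) (t - b) :=
    intervalIntegrable_rpow' (by linarith)
  simpa using h.comp_sub_left t

private lemma ker_eval {α : ℝ} (hα : 0 < α) (t b : ℝ) :
    ∫ τ in (0:ℝ)..b, (t - τ) ^ (α - 1) = (t ^ α - (t - b) ^ α) / α := by
  rw [integral_comp_sub_left (fun x => x ^ (α - 1)) t]
  rw [integral_rpow (Or.inl (by linarith))]
  simp only [sub_zero]
  rw [show α - 1 + 1 = α by ring]

set_option maxHeartbeats 1000000 in
theorem stmt_2 (T α μ : ℝ) (hT : 0 < T) (hα : α ∈ Ioc (0:ℝ) 1) (hμ : 0 ≤ μ)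
    (s : ℝ → ℝ) (hs : ContinuousOn s (Icc 0 T))
    (heq : ∀ t ∈ Icc (0:ℝ) T,
      s t + μ * ∫ τ in (0:ℝ)..t, ((t - τ) ^ (α - 1) / Real.Gamma α) * s τ = 1) :
    ∀ t ∈ Icc (0:ℝ) T, 0 ≤ s t := by
  set Γ := Real.Gamma α with hΓdef
  have hΓ : 0 < Γ := Real.Gamma_pos_of_pos hα.1
  have hgint : ∀ t a b : ℝ, 0 ≤ a → a ≤ b → b ≤ T →
      IntervalIntegrable (fun τ => ((t - τ) ^ (α - 1) / Γ) * s τ) volume a b := by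
    intro t a b ha hab hbT
    exact ((ker_intable hα.1 t a b).div_const Γ).mul_continuousOn
      (hs.mono (by rw [uIcc_of_le hab]; exact Icc_subset_Icc ha hbT))
  have s0 : s 0 = 1 := by simpa using heq 0 ⟨le_rfl, hT.le⟩
  intro t ht
  by_contra hneg0
  push_neg at hneg0
  -- the set of negativity and its infimum
  set U : Set ℝ := {x | x ∈ Icc (0:ℝ) T ∧ s x < 0} with hU
  have hUne : U.Nonempty := ⟨t, ht, hneg0⟩
  have hUbdd : BddBelow U := ⟨0, fun u hu => hu.1.1⟩
  set t₀ := sInf U with ht₀def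
  have hge : ∀ u ∈ U, t₀ ≤ u := fun u hu => csInf_le hUbdd hu
  have ht₀mem : t₀ ∈ Icc (0:ℝ) T :=
    ⟨le_csInf hUne fun u hu => hu.1.1, le_trans (hge t ⟨ht, hneg0⟩) ht.2⟩
  have hinf_approx : ∀ ε > 0, ∃ u ∈ U, u < t₀ + ε := by
    intro ε hε
    by_contra h
    push_neg at h
    have := le_csInf hUne h
    linarith
  have hcont : ∀ x ∈ Icc (0:ℝ) T, ∀ ε > 0, ∃ δ0 > 0,
      ∀ y ∈ Icc (0:ℝ) T, |y - x| < δ0 → |s y - s x| < ε := by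
    intro x hx ε hε
    have h := (hs x hx)
    rw [Metric.continuousWithinAt_iff] at h
    obtain ⟨δ0, hδ0, h⟩ := h ε hε
    exact ⟨δ0, hδ0, fun y hy hyx => by
      simpa [Real.dist_eq] using h hy (by simpa [Real.dist_eq] using hyx)⟩
  have hst₀_nonneg : 0 ≤ s t₀ := by
    by_contra h
    push_neg at h
    have ht₀pos : 0 < t₀ := by
      rcases eq_or_lt_of_le ht₀mem.1 with h0 | h0
      · exfalso; rw [← h0, s0] at h; linarith
      · exact h0
    obtain ⟨δ0, hδ0, hc⟩ := hcont t₀ ht₀mem (-(s t₀)) (by linarith)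
    set y := max 0 (t₀ - δ0 / 2) with hy
    have hy1 : y ∈ Icc (0:ℝ) T := ⟨le_max_left _ _, max_le hT.le (by linarith [ht₀mem.2])⟩
    have hylt : y < t₀ := max_lt ht₀pos (by linarith)
    have hyd : |y - t₀| < δ0 := abs_lt.2 ⟨by nlinarith [le_max_right 0 (t₀ - δ0/2)], by linarith⟩
    have h2 := hc y hy1 hyd
    have hsy : s y < 0 := by
      rcases abs_lt.1 h2 with ⟨h3, h4⟩; linarith
    exact absurd (hge y ⟨hy1, hsy⟩) (not_le.2 hylt)
  have hst₀_nonpos : s t₀ ≤ 0 := by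
    by_contra h
    push_neg at h
    obtain ⟨δ0, hδ0, hc⟩ := hcont t₀ ht₀mem (s t₀) h
    obtain ⟨u, hu, hult⟩ := hinf_approx δ0 hδ0
    have hdu : |u - t₀| < δ0 := abs_lt.2 ⟨by linarith [hge u hu], by linarith⟩
    have h2 := hc u hu.1 hdu
    rcases abs_lt.1 h2 with ⟨h3, h4⟩
    linarith [hu.2]
  have hst₀ : s t₀ = 0 := le_antisymm hst₀_nonpos hst₀_nonneg
  have hsnn : ∀ x ∈ Icc 0 t₀, 0 ≤ s x := by
    intro x hx
    rcases eq_or_lt_of_le hx.2 with h | h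
    · rw [h, hst₀]
    · by_contra hneg
      push_neg at hneg
      exact absurd (hge x ⟨⟨hx.1, le_trans hx.2 ht₀mem.2⟩, hneg⟩) (not_le.2 h)
  -- choice of the window width δ
  set δ := min 1 ((α * Γ / (μ + 1)) ^ α⁻¹) with hδdef
  have hP : 0 < α * Γ / (μ + 1) := div_pos (mul_pos hα.1 hΓ) (by linarith)
  have hδpos : 0 < δ := lt_min one_pos (Real.rpow_pos_of_pos hP _)
  have hαΓ : 0 < α * Γ := mul_pos hα.1 hΓ
  have hδq : μ * (δ ^ α / (α * Γ)) < 1 := by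
    have h1 : δ ^ α ≤ α * Γ / (μ + 1) := by
      calc δ ^ α ≤ ((α * Γ / (μ + 1)) ^ α⁻¹) ^ α :=
            Real.rpow_le_rpow hδpos.le (min_le_right _ _) hα.1.le
        _ = α * Γ / (μ + 1) := by
            rw [← Real.rpow_mul hP.le, inv_mul_cancel₀ (ne_of_gt hα.1), Real.rpow_one]
    have h2 : μ * δ ^ α < α * Γ := by
      have := mul_le_mul_of_nonneg_left h1 hμ
      have h3 : μ * (α * Γ / (μ + 1)) < α * Γ := by
        rw [mul_div_assoc', div_lt_iff₀ (by linarith : (0:ℝ) < μ + 1)]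
        nlinarith
      linarith
    rw [mul_div_assoc']
    exact (div_lt_one hαΓ).2 h2
  -- pick a negativity point within δ of t₀
  obtain ⟨u, hu, hult⟩ := hinf_approx δ hδpos
  have hugt : t₀ < u := by
    rcases eq_or_lt_of_le (hge u hu) with h0 | h0
    · exfalso
      have h2 := hu.2
      rw [← h0, hst₀] at h2
      exact lt_irrefl 0 h2
    · exact h0
  -- minimum point on [t₀, u]
  have hIcc_sub : Icc t₀ u ⊆ Icc 0 T := Icc_subset_Icc ht₀mem.1 hu.1.2
  obtain ⟨ts, hts, htsmin⟩ :=
    isCompact_Icc.exists_isMinOn (nonempty_Icc.2 hugt.le) (hs.mono hIcc_sub)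
  set m := s ts with hm_def
  have hmin : ∀ x ∈ Icc t₀ u, m ≤ s x := fun x hx => isMinOn_iff.1 htsmin x hx
  have hm : m < 0 := lt_of_le_of_lt (hmin u (right_mem_Icc.2 hugt.le)) hu.2
  -- the last zero before ts
  set Z : Set ℝ := {x | x ∈ Icc t₀ ts ∧ s x = 0} with hZ
  have ht₀Z : t₀ ∈ Z := ⟨left_mem_Icc.2 hts.1, hst₀⟩
  have hZne : Z.Nonempty := ⟨t₀, ht₀Z⟩
  have hZbdd : BddAbove Z := ⟨ts, fun x hx => hx.1.2⟩
  have hZle : ∀ z ∈ Z, z ≤ sSup Z := fun z hz => le_csSup hZbdd hz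
  set t₂ := sSup Z with ht₂def
  have ht₂mem : t₂ ∈ Icc t₀ ts := ⟨hZle t₀ ht₀Z, csSup_le hZne fun x hx => hx.1.2⟩
  have hsup_approx : ∀ ε > 0, ∃ z ∈ Z, t₂ - ε < z := by
    intro ε hε
    by_contra h
    push_neg at h
    have := csSup_le hZne fun z hz => h z hz
    linarith
  have h0t₂ : 0 ≤ t₂ := le_trans ht₀mem.1 ht₂mem.1
  have htsT : ts ≤ T := le_trans hts.2 hu.1.2
  have ht₂T : t₂ ∈ Icc (0:ℝ) T := ⟨h0t₂, le_trans ht₂mem.2 htsT⟩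
  have hst₂ : s t₂ = 0 := by
    by_contra h
    obtain ⟨δ0, hδ0, hc⟩ := hcont t₂ ht₂T |(s t₂)| (abs_pos.2 h)
    obtain ⟨z, hz, hzgt⟩ := hsup_approx δ0 hδ0
    have hzle : z ≤ t₂ := hZle z hz
    have hd : |z - t₂| < δ0 := abs_lt.2 ⟨by linarith, by linarith⟩
    have h2 := hc z (hIcc_sub ⟨hz.1.1, le_trans hz.1.2 hts.2⟩) hd
    rw [hz.2, zero_sub, abs_neg] at h2
    exact lt_irrefl _ h2
  have ht₂lt : t₂ < ts := by
    rcases eq_or_lt_of_le ht₂mem.2 with h0 | h0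
    · exfalso; rw [h0] at hst₂; rw [← hm_def] at hst₂; linarith
    · exact h0
  have hsle : ∀ x ∈ Icc t₂ ts, s x ≤ 0 := by
    intro x hx
    by_contra h
    push_neg at h
    have hxgt : t₂ < x := by
      rcases eq_or_lt_of_le hx.1 with h0 | h0
      · exfalso; rw [← h0, hst₂] at h; exact lt_irrefl 0 h
      · exact h0
    have hxts : x ≤ ts := hx.2
    have hcont' : ContinuousOn s (Icc x ts) :=
      hs.mono (Icc_subset_Icc (le_trans h0t₂ hx.1) htsT)
    have hzero : (0:ℝ) ∈ Icc (s ts) (s x) := ⟨hm.le, h.le⟩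
    obtain ⟨z, hzmem, hsz⟩ := intermediate_value_Icc' hxts hcont' hzero
    have hzZ : z ∈ Z :=
      ⟨⟨le_trans ht₂mem.1 (le_trans hx.1 hzmem.1), hzmem.2⟩, hsz⟩
    have := hZle z hzZ
    linarith [hzmem.1]
  have hsge : ∀ x ∈ Icc (0:ℝ) t₂, m ≤ s x := by
    intro x hx
    rcases le_or_gt x t₀ with h | h
    · exact le_trans hm.le (hsnn x ⟨hx.1, h⟩)
    · exact hmin x ⟨h.le, le_trans hx.2 (le_trans ht₂mem.2 hts.2)⟩
  -- the integral identity
  have htsmem : ts ∈ Icc (0:ℝ) T := ⟨le_trans h0t₂ ht₂lt.le, htsT⟩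
  have heq1 := heq ts htsmem
  have heq2 := heq t₂ ht₂T
  have hi1 : IntervalIntegrable (fun τ => ((ts - τ) ^ (α - 1) / Γ) * s τ) volume 0 t₂ :=
    hgint ts 0 t₂ le_rfl h0t₂ ht₂T.2
  have hi2 : IntervalIntegrable (fun τ => ((ts - τ) ^ (α - 1) / Γ) * s τ) volume t₂ ts :=
    hgint ts t₂ ts h0t₂ ht₂lt.le htsT
  have hi3 : IntervalIntegrable (fun τ => ((t₂ - τ) ^ (α - 1) / Γ) * s τ) volume 0 t₂ :=
    hgint t₂ 0 t₂ le_rfl h0t₂ ht₂T.2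
  have hsplit : (∫ τ in (0:ℝ)..ts, ((ts - τ) ^ (α - 1) / Γ) * s τ) =
      (∫ τ in (0:ℝ)..t₂, ((ts - τ) ^ (α - 1) / Γ) * s τ) +
      ∫ τ in t₂..ts, ((ts - τ) ^ (α - 1) / Γ) * s τ :=
    (integral_add_adjacent_intervals hi1 hi2).symm
  set E₂ := ∫ τ in (0:ℝ)..t₂, ((t₂ - τ) ^ (α - 1) / Γ) * s τ with hE₂
  set Es := ∫ τ in (0:ℝ)..t₂, ((ts - τ) ^ (α - 1) / Γ) * s τ with hEs
  set F := ∫ τ in t₂..ts, ((ts - τ) ^ (α - 1) / Γ) * s τ with hF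
  -- F ≤ 0
  have hFle : F ≤ 0 := by
    have h1 : (0:ℝ) ≤ ∫ τ in t₂..ts, -(((ts - τ) ^ (α - 1) / Γ) * s τ) := by
      apply intervalIntegral.integral_nonneg ht₂lt.le
      intro x hx
      have hK : 0 ≤ (ts - x) ^ (α - 1) / Γ :=
        div_nonneg (Real.rpow_nonneg (by linarith [hx.2]) _) hΓ.le
      nlinarith [hsle x hx]
    rw [intervalIntegral.integral_neg] at h1
    linarith
  -- comparison on [0, t₂]
  have hmono : (∫ τ in (0:ℝ)..t₂,
        ((t₂ - τ) ^ (α - 1) / Γ - (ts - τ) ^ (α - 1) / Γ) * m) ≤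
      ∫ τ in (0:ℝ)..t₂,
        (((t₂ - τ) ^ (α - 1) / Γ) * s τ - ((ts - τ) ^ (α - 1) / Γ) * s τ) := by
    apply intervalIntegral.integral_mono_ae_restrict h0t₂
    · exact (((ker_intable hα.1 t₂ 0 t₂).div_const Γ).sub
        ((ker_intable hα.1 ts 0 t₂).div_const Γ)).mul_const m
    · exact hi3.sub hi1
    · have h1 : ∀ᵐ τ ∂(volume.restrict (Icc (0:ℝ) t₂)), τ ∈ Icc (0:ℝ) t₂ :=
        ae_restrict_mem measurableSet_Icc
      have h2 : ∀ᵐ τ ∂(volume.restrict (Icc (0:ℝ) t₂)), τ ≠ t₂ := by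
        apply ae_restrict_of_ae
        rw [ae_iff]
        have : {a : ℝ | ¬a ≠ t₂} = {t₂} := by ext x; simp
        rw [this]
        exact measure_singleton t₂
      filter_upwards [h1, h2] with τ hτ hτne
      have hτlt : τ < t₂ := lt_of_le_of_ne hτ.2 hτne
      have hk : (ts - τ) ^ (α - 1) ≤ (t₂ - τ) ^ (α - 1) :=
        Real.rpow_le_rpow_of_nonpos (by linarith)
          (by linarith) (by linarith [hα.2])
      have hker : 0 ≤ (t₂ - τ) ^ (α - 1) / Γ - (ts - τ) ^ (α - 1) / Γ := by
        apply sub_nonneg.2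
        gcongr
      have hsτ : m ≤ s τ := hsge τ ⟨hτ.1, hτ.2⟩
      calc ((t₂ - τ) ^ (α - 1) / Γ - (ts - τ) ^ (α - 1) / Γ) * m
          ≤ ((t₂ - τ) ^ (α - 1) / Γ - (ts - τ) ^ (α - 1) / Γ) * s τ :=
            mul_le_mul_of_nonneg_left hsτ hker
        _ = ((t₂ - τ) ^ (α - 1) / Γ) * s τ - ((ts - τ) ^ (α - 1) / Γ) * s τ := by ring
  -- evaluate the comparison integral
  have hLHS : (∫ τ in (0:ℝ)..t₂,
        ((t₂ - τ) ^ (α - 1) / Γ - (ts - τ) ^ (α - 1) / Γ) * m) =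
      ((t₂ ^ α - (t₂ - t₂) ^ α) / α / Γ - (ts ^ α - (ts - t₂) ^ α) / α / Γ) * m := by
    rw [intervalIntegral.integral_mul_const, intervalIntegral.integral_sub
      ((ker_intable hα.1 t₂ 0 t₂).div_const Γ) ((ker_intable hα.1 ts 0 t₂).div_const Γ),
      intervalIntegral.integral_div, intervalIntegral.integral_div,
      ker_eval hα.1 t₂ t₂, ker_eval hα.1 ts t₂]
  have hRHS : (∫ τ in (0:ℝ)..t₂,
        (((t₂ - τ) ^ (α - 1) / Γ) * s τ - ((ts - τ) ^ (α - 1) / Γ) * s τ)) = E₂ - Es :=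
    intervalIntegral.integral_sub hi3 hi1
  -- the final contradiction
  have hiden : m = μ * (E₂ - Es) - μ * F := by
    rw [hsplit] at heq1
    rw [hst₂] at heq2
    rw [← hm_def] at heq1
    ring_nf at heq1 heq2 ⊢
    linarith
  have hDbound : (t₂ ^ α - (t₂ - t₂) ^ α) / α / Γ - (ts ^ α - (ts - t₂) ^ α) / α / Γ
      ≤ δ ^ α / (α * Γ) := by
    have h1 : t₂ ^ α ≤ ts ^ α := Real.rpow_le_rpow h0t₂ ht₂lt.le hα.1.le
    have h2 : (ts - t₂) ^ α ≤ δ ^ α := by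
      apply Real.rpow_le_rpow (by linarith) _ hα.1.le
      have : ts ≤ u := hts.2
      have : t₀ ≤ t₂ := ht₂mem.1
      linarith
    have h3 : (t₂ - t₂ : ℝ) ^ α = 0 := by
      rw [sub_self]; exact Real.zero_rpow (ne_of_gt hα.1)
    rw [h3]
    have heqd : (t₂ ^ α - 0) / α / Γ - (ts ^ α - (ts - t₂) ^ α) / α / Γ =
        (t₂ ^ α - ts ^ α + (ts - t₂) ^ α) / (α * Γ) := by
      field_simp
      ring
    rw [heqd]
    rw [div_le_div_iff_of_pos_right hαΓ]
    linarith
  clear_value Γ δ m E₂ Es F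
  have hq0 : 0 ≤ μ * (δ ^ α / (α * Γ)) :=
    mul_nonneg hμ (div_nonneg (Real.rpow_nonneg hδpos.le _) hαΓ.le)
  have hstep1 : ((t₂ ^ α - (t₂ - t₂) ^ α) / α / Γ - (ts ^ α - (ts - t₂) ^ α) / α / Γ) * m
      ≤ E₂ - Es := by
    rw [← hLHS]
    rw [← hRHS]
    exact hmono
  have hstep2 : (δ ^ α / (α * Γ)) * m
      ≤ ((t₂ ^ α - (t₂ - t₂) ^ α) / α / Γ - (ts ^ α - (ts - t₂) ^ α) / α / Γ) * m :=
    mul_le_mul_of_nonpos_right hDbound hm.le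
  have hfinal : (μ * (δ ^ α / (α * Γ))) * m ≤ m := by
    calc (μ * (δ ^ α / (α * Γ))) * m = μ * ((δ ^ α / (α * Γ)) * m) := by ring
      _ ≤ μ * (E₂ - Es) := mul_le_mul_of_nonneg_left (le_trans hstep2 hstep1) hμ
      _ ≤ μ * (E₂ - Es) - μ * F := by
          have hμF : μ * F ≤ 0 := mul_nonpos_of_nonneg_of_nonpos hμ hFle
          linarith
      _ = m := hiden.symm
  nlinarith [mul_pos_of_neg_of_neg hm (show μ * (δ ^ α / (α * Γ)) - 1 < 0 by linarith)]
end

section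
/- Let H be a real separable Hilbert space, A : H → H a bounded linear operator, T > 0, let a : [0,T] → ℝ be continuously differentiable with derivative ȧ and c := a(0) ≠ 0, and let w : [0,T] → H be continuous. Suppose X : [0,T] → H is continuous and satisfies X(t) = ∫₀ᵗ a(t-τ) A(X(τ)) dτ + w(t) for all t ∈ [0,T]. Then for all t ∈ [0,T], X(t) = A( ∫₀ᵗ exp(c(t-τ)A) [ ∫₀^τ ȧ(τ-σ) X(σ) dσ + c·w(τ) ] dτ ) + w(t). -/
/-!
Put `Y = X - w` and `G(s) = ∫₀ˢ ȧ(s - σ) X(σ) dσ + c w(s)`. Writing `a(t - τ) = c + ∫_τ^t ȧ(s - τ) ds`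
and exchanging the order of integration over the triangle `0 ≤ τ ≤ s ≤ t` turns the Volterra
equation into `Y(t) = ∫₀ᵗ (c A Y(s) + A G(s)) ds`, i.e. `Y' = c A Y + A G` with `Y(0) = 0`.
Variation of constants gives `Y(t) = ∫₀ᵗ exp(c (t - τ) A) A G(τ) dτ`, and `A` commutes with the
exponential and with the integral.
-/

open MeasureTheory Set Function intervalIntegral

theorem ContinuousOn.exists_continuous_eqOn_Icc {β : Type*} [TopologicalSpace β] {f : ℝ → β}
    {a b : ℝ} (hab : a ≤ b) (hf : ContinuousOn f (Icc a b)) :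
    ∃ g : ℝ → β, Continuous g ∧ EqOn f g (Icc a b) :=
  ⟨IccExtend hab ((Icc a b).domRestrict f), hf.domRestrict.Icc_extend',
    fun _ hx => (IccExtend_of_mem hab ((Icc a b).domRestrict f) hx).symm⟩

section

variable {E : Type*} [NormedAddCommGroup E] [NormedSpace ℝ E]

theorem eq_add_integral_of_hasDerivWithinAt_Icc [CompleteSpace E] {f f' : ℝ → E} {a b : ℝ}
    (hf : ∀ x ∈ Icc a b, HasDerivWithinAt f (f' x) (Icc a b) x) (hf' : ContinuousOn f' (Icc a b))
    {r : ℝ} (hr : r ∈ Icc a b) : f r = f a + ∫ u in a..r, f' u := by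
  have hsub : Icc a r ⊆ Icc a b := Icc_subset_Icc_right hr.2
  rw [integral_eq_sub_of_hasDerivAt_of_le hr.1
    (fun u hu => (hf u (hsub hu)).continuousWithinAt.mono hsub)
    (fun u hu => (hf u (hsub (Ioo_subset_Icc_self hu))).hasDerivAt
      (Icc_mem_nhds hu.1 (hu.2.trans_le hr.2)))
    ((hf'.mono hsub).intervalIntegrable_of_Icc hr.1)]
  abel

theorem intervalIntegral_intervalIntegral_swap_triangle {F : ℝ → ℝ → E}
    (hF : Continuous (uncurry F)) {a b : ℝ} (hab : a ≤ b) :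
    ∫ τ in a..b, ∫ s in τ..b, F s τ = ∫ s in a..b, ∫ τ in a..s, F s τ := by
  set Φ : ℝ → ℝ → E := fun s τ => if τ ≤ s then F s τ else 0
  have hΦ_eq : uncurry Φ = {p : ℝ × ℝ | p.2 ≤ p.1}.indicator (uncurry F) := by
    ext ⟨s, τ⟩; simp [Φ, indicator]
  have hΦ : IntegrableOn (uncurry Φ) (uIoc a b ×ˢ uIoc a b) := by
    rw [hΦ_eq]
    refine IntegrableOn.indicator ?_ (measurableSet_le measurable_snd measurable_fst)
    exact (hF.continuousOn.integrableOn_compact (isCompact_uIcc.prod isCompact_uIcc)).mono_set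
      (prod_mono uIoc_subset_uIcc uIoc_subset_uIcc)
  have hΦcol : ∀ τ ∈ uIcc a b, ∫ s in a..b, Φ s τ = ∫ s in τ..b, F s τ := by
    intro τ hτ
    rw [uIcc_of_le hab] at hτ
    have hint (c d : ℝ) : IntervalIntegrable (Φ · τ) volume c d := by
      have hcol : (Φ · τ) = (Ici τ).indicator (F · τ) := by ext s; simp [Φ, indicator]
      rw [hcol, intervalIntegrable_iff]
      exact (Continuous.integrableOn_uIoc (by fun_prop)).indicator measurableSet_Ici
    have hlow : ∫ s in a..τ, Φ s τ = 0 := by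
      refine (integral_congr_ae ((Measure.ae_ne volume τ).mono fun s hsτ hs => if_neg ?_)).trans
        integral_zero
      rw [uIoc_of_le hτ.1] at hs
      exact (lt_of_le_of_ne hs.2 hsτ).not_ge
    have hhigh : ∫ s in τ..b, Φ s τ = ∫ s in τ..b, F s τ :=
      integral_congr fun s hs => if_pos (uIcc_of_le hτ.2 ▸ hs).1
    rw [← integral_add_adjacent_intervals (hint a τ) (hint τ b), hlow, hhigh, zero_add]
  have hΦrow : ∀ s ∈ uIcc a b, ∫ τ in a..b, Φ s τ = ∫ τ in a..s, F s τ := by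
    intro s hs
    rw [uIcc_of_le hab] at hs
    rw [← intervalIntegral.integral_indicator hs]
    rfl
  calc ∫ τ in a..b, ∫ s in τ..b, F s τ = ∫ τ in a..b, ∫ s in a..b, Φ s τ :=
        (integral_congr hΦcol).symm
    _ = ∫ s in a..b, ∫ τ in a..b, Φ s τ :=
        (intervalIntegral_intervalIntegral_swap hΦ).symm
    _ = ∫ s in a..b, ∫ τ in a..s, F s τ := integral_congr hΦrow

theorem integral_kernel_smul_eq_integral_deriv_kernel [CompleteSpace E] {k k' : ℝ → ℝ} {g : ℝ → E}
    (hk' : Continuous k') (hg : Continuous g) {t : ℝ} (ht : 0 ≤ t)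
    (hk : ∀ r ∈ Icc 0 t, k r = k 0 + ∫ u in 0..r, k' u) :
    ∫ τ in 0..t, k (t - τ) • g τ = ∫ s in 0..t, (k 0 • g s + ∫ τ in 0..s, k' (s - τ) • g τ) := by
  have hshift (τ : ℝ) : ∫ s in τ..t, k' (s - τ) • g τ = (∫ u in 0..t - τ, k' u) • g τ := by
    rw [intervalIntegral.integral_smul_const, integral_comp_sub_right (fun u => k' u), sub_self]
  have hsplit : ∀ τ ∈ uIcc 0 t, k (t - τ) • g τ = k 0 • g τ + ∫ s in τ..t, k' (s - τ) • g τ := by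
    intro τ hτ
    rw [uIcc_of_le ht] at hτ
    rw [hshift, hk _ ⟨sub_nonneg.2 hτ.2, sub_le_self _ hτ.1⟩, add_smul]
  have hcont : Continuous fun τ => ∫ s in τ..t, k' (s - τ) • g τ := by
    simp_rw [hshift]; fun_prop
  calc ∫ τ in 0..t, k (t - τ) • g τ
      = ∫ τ in 0..t, (k 0 • g τ + ∫ s in τ..t, k' (s - τ) • g τ) := integral_congr hsplit
    _ = (∫ τ in 0..t, k 0 • g τ) + ∫ τ in 0..t, ∫ s in τ..t, k' (s - τ) • g τ :=
        integral_add ((hg.const_smul _).intervalIntegrable _ _) (hcont.intervalIntegrable _ _)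
    _ = (∫ s in 0..t, k 0 • g s) + ∫ s in 0..t, ∫ τ in 0..s, k' (s - τ) • g τ := by
        rw [intervalIntegral_intervalIntegral_swap_triangle (by fun_prop) ht]
    _ = ∫ s in 0..t, (k 0 • g s + ∫ τ in 0..s, k' (s - τ) • g τ) :=
        (integral_add ((hg.const_smul _).intervalIntegrable _ _)
          (Continuous.intervalIntegrable (by fun_prop) _ _)).symm

theorem hasDerivAt_exp_sub_smul [CompleteSpace E] (B : E →L[ℝ] E) (t s : ℝ) :
    HasDerivAt (fun s => NormedSpace.exp ((t - s) • B))
      (-(B * NormedSpace.exp ((t - s) • B))) s := by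
  simpa [Function.comp_def] using
    (hasDerivAt_exp_smul_const' B (t - s)).scomp s ((hasDerivAt_id s).const_sub t)

theorem eq_integral_exp_smul_apply_of_eq_integral [CompleteSpace E] (B : E →L[ℝ] E)
    {f Y : ℝ → E} (hf : Continuous f) (hY : Continuous Y) {t : ℝ} (ht : 0 ≤ t)
    (hYeq : ∀ s ∈ Icc 0 t, Y s = ∫ u in 0..s, (B (Y u) + f u)) :
    Y t = ∫ τ in 0..t, NormedSpace.exp ((t - τ) • B) (f τ) := by
  set U : ℝ → E →L[ℝ] E := fun s => NormedSpace.exp ((t - s) • B)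
  have hUc : Continuous U :=
    continuous_iff_continuousAt.2 fun s => (hasDerivAt_exp_sub_smul B t s).continuousAt
  have hYder : ∀ s ∈ Ioo 0 t, HasDerivAt Y (B (Y s) + f s) s := by
    intro s hs
    have hprim := (Continuous.integral_hasStrictDerivAt (f := fun u => B (Y u) + f u)
      (by fun_prop) 0 s).hasDerivAt
    refine hprim.congr_of_eventuallyEq ?_
    filter_upwards [Ioo_mem_nhds hs.1 hs.2] with u hu using hYeq u (Ioo_subset_Icc_self hu)
  have hZder : ∀ s ∈ Ioo 0 t, HasDerivAt (fun s => U s (Y s)) (U s (f s)) s := by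
    intro s hs
    convert (hasDerivAt_exp_sub_smul B t s).clm_apply (hYder s hs) using 1
    have hcomm : Commute B (U s) := ((Commute.refl B).smul_right (t - s)).exp_right
    have hBU : B (U s (Y s)) = U s (B (Y s)) := DFunLike.congr_fun hcomm.eq (Y s)
    rw [neg_apply, mul_apply_eq_comp, hBU, map_add]
    abel
  have hftc := integral_eq_sub_of_hasDerivAt_of_le ht (by fun_prop) hZder
    (Continuous.intervalIntegrable (by fun_prop) _ _)
  rw [hftc, hYeq 0 (left_mem_Icc.2 ht)]
  simp [U]

theorem eq_apply_integral_exp_of_volterra [CompleteSpace E] (A : E →L[ℝ] E) {a a' : ℝ → ℝ}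
    {w X : ℝ → E} (ha' : Continuous a') (hw : Continuous w) (hX : Continuous X) {t : ℝ}
    (ht : 0 ≤ t) (ha : ∀ r ∈ Icc 0 t, a r = a 0 + ∫ u in 0..r, a' u)
    (heq : ∀ s ∈ Icc 0 t, X s = (∫ τ in 0..s, a (s - τ) • A (X τ)) + w s) :
    X t = A (∫ τ in 0..t, NormedSpace.exp ((a 0 * (t - τ)) • A)
      ((∫ σ in 0..τ, a' (τ - σ) • X σ) + a 0 • w τ)) + w t := by
  set G : ℝ → E := fun τ => (∫ σ in 0..τ, a' (τ - σ) • X σ) + a 0 • w τ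
  have hG : Continuous G := by fun_prop
  have hexp : Continuous fun u : ℝ => NormedSpace.exp (u • A) :=
    (differentiable_exp_smul_const ℝ A).continuous
  have hA_conv (s : ℝ) :
      ∫ τ in 0..s, a' (s - τ) • A (X τ) = A (∫ τ in 0..s, a' (s - τ) • X τ) := by
    rw [← A.intervalIntegral_comp_comm (Continuous.intervalIntegrable (by fun_prop) _ _)]
    simp only [map_smul]
  have hY : ∀ s ∈ Icc 0 t, X s - w s = ∫ u in 0..s, ((a 0 • A) (X u - w u) + A (G u)) := by
    intro s hs
    rw [heq s hs, add_sub_cancel_right, integral_kernel_smul_eq_integral_deriv_kernel ha'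
      (by fun_prop) hs.1 fun r hr => ha r ⟨hr.1, hr.2.trans hs.2⟩]
    refine integral_congr fun u _ => ?_
    simp only [G, hA_conv, smul_apply, map_sub, map_add, map_smul]
    abel
  have hconv : Continuous fun τ => NormedSpace.exp ((a 0 * (t - τ)) • A) (G τ) :=
    (hexp.comp (by fun_prop)).clm_apply hG
  rw [← sub_eq_iff_eq_add, eq_integral_exp_smul_apply_of_eq_integral (a 0 • A)
      (by fun_prop : Continuous fun u => A (G u)) (Y := fun s => X s - w s) (hX.sub hw) ht hY,
    ← A.intervalIntegral_comp_comm (hconv.intervalIntegrable _ _)]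
  refine integral_congr fun τ _ => ?_
  rw [smul_smul, mul_comm]
  exact (DFunLike.congr_fun ((Commute.refl A).smul_right _).exp_right.eq (G τ)).symm

theorem eq_apply_integral_exp_of_volterra_of_continuousOn [CompleteSpace E] (A : E →L[ℝ] E)
    {a a' : ℝ → ℝ} {w X : ℝ → E} {t : ℝ} (ht : 0 ≤ t) (ha' : ContinuousOn a' (Icc 0 t))
    (hw : ContinuousOn w (Icc 0 t)) (hX : ContinuousOn X (Icc 0 t))
    (ha : ∀ r ∈ Icc 0 t, a r = a 0 + ∫ u in 0..r, a' u)
    (heq : ∀ s ∈ Icc 0 t, X s = (∫ τ in 0..s, a (s - τ) • A (X τ)) + w s) :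
    X t = A (∫ τ in 0..t, NormedSpace.exp ((a 0 * (t - τ)) • A)
      ((∫ σ in 0..τ, a' (τ - σ) • X σ) + a 0 • w τ)) + w t := by
  have hmem : ∀ s ∈ Icc 0 t, ∀ σ ∈ uIcc 0 s, σ ∈ Icc 0 t ∧ s - σ ∈ Icc 0 t := by
    intro s hs σ hσ
    rw [uIcc_of_le hs.1] at hσ
    exact ⟨⟨hσ.1, hσ.2.trans hs.2⟩, ⟨sub_nonneg.2 hσ.2, (sub_le_self _ hσ.1).trans hs.2⟩⟩
  -- Only values on `[0, t]` enter, so the data may be replaced by continuous extensions to `ℝ`.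
  obtain ⟨a₁, ha₁, ha'a₁⟩ := ha'.exists_continuous_eqOn_Icc ht
  obtain ⟨w₁, hw₁, hww₁⟩ := hw.exists_continuous_eqOn_Icc ht
  obtain ⟨X₁, hX₁, hXX₁⟩ := hX.exists_continuous_eqOn_Icc ht
  have ha₁_eq : ∀ r ∈ Icc 0 t, a r = a 0 + ∫ u in 0..r, a₁ u := fun r hr => by
    rw [ha r hr, integral_congr fun u hu => ha'a₁ (hmem r hr u hu).1]
  have heq₁ : ∀ s ∈ Icc 0 t, X₁ s = (∫ τ in 0..s, a (s - τ) • A (X₁ τ)) + w₁ s := by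
    intro s hs
    rw [← hXX₁ hs, ← hww₁ hs, heq s hs]
    congr 1
    exact integral_congr fun τ hτ => by rw [hXX₁ (hmem s hs τ hτ).1]
  rw [hXX₁ (right_mem_Icc.2 ht), hww₁ (right_mem_Icc.2 ht),
    eq_apply_integral_exp_of_volterra A ha₁ hw₁ hX₁ ht ha₁_eq heq₁]
  refine congrArg (fun v => A v + w₁ t) (integral_congr fun τ hτ => ?_)
  obtain ⟨hτt, -⟩ := hmem t (right_mem_Icc.2 ht) τ hτ
  have hinner : ∫ σ in 0..τ, a₁ (τ - σ) • X₁ σ = ∫ σ in 0..τ, a' (τ - σ) • X σ :=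
    integral_congr fun σ hσ => by
      rw [← ha'a₁ (hmem τ hτt σ hσ).2, ← hXX₁ (hmem τ hτt σ hσ).1]
  simp only [hinner, ← hww₁ hτt]

end

theorem stmt_7_general {H : Type*} [NormedAddCommGroup H] [InnerProductSpace ℝ H]
    [CompleteSpace H]
    (A : H →L[ℝ] H) (T : ℝ)
    (a a' : ℝ → ℝ)
    (ha : ∀ t ∈ Icc (0:ℝ) T, HasDerivWithinAt a (a' t) (Icc 0 T) t)
    (ha' : ContinuousOn a' (Icc 0 T))
    (w : ℝ → H) (hw : ContinuousOn w (Icc 0 T))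
    (X : ℝ → H) (hX : ContinuousOn X (Icc 0 T))
    (heq : ∀ t ∈ Icc (0:ℝ) T, X t = (∫ τ in (0:ℝ)..t, a (t - τ) • A (X τ)) + w t) :
    ∀ t ∈ Icc (0:ℝ) T,
      X t = A (∫ τ in (0:ℝ)..t,
          (NormedSpace.exp ((a 0 * (t - τ)) • A))
            ((∫ σ in (0:ℝ)..τ, a' (τ - σ) • X σ) + a 0 • w τ)) + w t := by
  intro t ht
  have hsub : Icc 0 t ⊆ Icc 0 T := Icc_subset_Icc_right ht.2
  exact eq_apply_integral_exp_of_volterra_of_continuousOn A ht.1 (ha'.mono hsub) (hw.mono hsub)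
    (hX.mono hsub) (fun r hr => eq_add_integral_of_hasDerivWithinAt_Icc ha ha' (hsub hr))
    (fun s hs => heq s (hsub hs))

theorem stmt_7 {H : Type*} [NormedAddCommGroup H] [InnerProductSpace ℝ H]
    [TopologicalSpace.SeparableSpace H] [CompleteSpace H]
    (A : H →L[ℝ] H) (T : ℝ) (hT : 0 < T)
    (a a' : ℝ → ℝ)
    (ha : ∀ t ∈ Icc (0:ℝ) T, HasDerivWithinAt a (a' t) (Icc 0 T) t)
    (ha' : ContinuousOn a' (Icc 0 T))
    (hc : a 0 ≠ 0)
    (w : ℝ → H) (hw : ContinuousOn w (Icc 0 T))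
    (X : ℝ → H) (hX : ContinuousOn X (Icc 0 T))
    (heq : ∀ t ∈ Icc (0:ℝ) T, X t = (∫ τ in (0:ℝ)..t, a (t - τ) • A (X τ)) + w t) :
    ∀ t ∈ Icc (0:ℝ) T,
      X t = A (∫ τ in (0:ℝ)..t,
          (NormedSpace.exp ((a 0 * (t - τ)) • A))
            ((∫ σ in (0:ℝ)..τ, a' (τ - σ) • X σ) + a 0 • w τ)) + w t :=
  stmt_7_general A T a a' ha ha' w hw X hX heq
end

section
/- Let H be a real separable Hilbert space. Let T(t), t ≥ 0, be a strongly continuous semigroup of bounded linear operators on H (T(0) = I, T(t+s) = T(t)T(s) for s,t ≥ 0, and t ↦ T(t)x is continuous for each x ∈ H), and let A : D → H be a linear map on a subspace D ⊆ H such that for every x ∈ D and t ≥ 0 one has T(t)x ∈ D and the map t ↦ T(t)x is differentiable with derivative T(t)(Ax). Let T₀ > 0, let a : [0,T₀] → ℝ be continuously differentiable with derivative ȧ and a(0) = 1, and let w : [0,T₀] → H be continuous. Suppose X : [0,T₀] → H is continuous and for every t ∈ [0,T₀] the element Z(t) := ∫₀ᵗ a(t-τ) X(τ) dτ belongs to D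 and X(t) = A(Z(t)) + w(t). Then for every t ∈ [0,T₀], the element Y(t) := ∫₀ᵗ T(t-τ)[ ∫₀^τ ȧ(τ-σ) X(σ) dσ + w(τ) ] dτ belongs to D and X(t) = A(Y(t)) + w(t). -/
open MeasureTheory Set Filter Asymptotics Topology

lemma aux_fubini_triangle {E : Type*} [NormedAddCommGroup E] [NormedSpace ℝ E] [CompleteSpace E]
    (F : ℝ → ℝ → E) (hF : Continuous (Function.uncurry F)) {τ : ℝ} (hτ : 0 ≤ τ) :
    (∫ σ in (0:ℝ)..τ, ∫ v in σ..τ, F v σ) = ∫ v in (0:ℝ)..τ, ∫ σ in (0:ℝ)..v, F v σ := by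
  obtain ⟨M, hM⟩ := (isCompact_Icc.prod isCompact_Icc).exists_bound_of_continuousOn
      (hF.continuousOn (s := Icc (0:ℝ) τ ×ˢ Icc (0:ℝ) τ))
  set S : Set (ℝ × ℝ) := {p | 0 < p.1 ∧ p.1 < p.2 ∧ p.2 ≤ τ} with hS
  have hSmeas : MeasurableSet S := by
    exact MeasurableSet.inter (measurableSet_lt measurable_const measurable_fst)
      ((measurableSet_lt measurable_fst measurable_snd).inter
        (measurableSet_le measurable_snd measurable_const))
  set u : ℝ × ℝ → E := S.indicator (fun p => F p.2 p.1) with hu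
  set μ : Measure ℝ := volume.restrict (Ioc (0:ℝ) τ) with hμ
  haveI : IsFiniteMeasure μ := by
    constructor
    rw [hμ, Measure.restrict_apply_univ, Real.volume_Ioc]
    exact ENNReal.ofReal_lt_top
  have hbound : ∀ p, ‖u p‖ ≤ max M 0 := by
    intro p
    rw [hu]
    by_cases hp : p ∈ S
    · rw [indicator_of_mem hp]
      refine le_max_of_le_left ?_
      exact hM (p.2, p.1) ⟨⟨(lt_trans hp.1 hp.2.1).le, hp.2.2⟩, ⟨hp.1.le, le_trans hp.2.1.le hp.2.2⟩⟩
    · rw [indicator_of_notMem hp]; simp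
  have hmeas : AEStronglyMeasurable u (μ.prod μ) :=
    (((hF.comp (continuous_snd.prodMk continuous_fst)).stronglyMeasurable).indicator hSmeas).aestronglyMeasurable
  have hint : Integrable u (μ.prod μ) :=
    (integrable_const (max M 0)).mono' hmeas (Filter.Eventually.of_forall hbound)
  have hswap := MeasureTheory.integral_integral_swap (f := fun σ v => u (σ, v)) (μ := μ) (ν := μ) hint
  have hL : (∫ σ in (0:ℝ)..τ, ∫ v in σ..τ, F v σ) = ∫ σ, (∫ v, u (σ, v) ∂μ) ∂μ := by
    rw [intervalIntegral.integral_of_le hτ, hμ]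
    refine setIntegral_congr_fun measurableSet_Ioc fun σ hσ => ?_
    have h1 : ∀ v, u (σ, v) = (Ioc σ τ).indicator (fun v => F v σ) v := by
      intro v
      rw [hu]
      by_cases hv : v ∈ Ioc σ τ
      · rw [indicator_of_mem _ , indicator_of_mem hv]; exact ⟨hσ.1, hv.1, hv.2⟩
      · rw [indicator_of_notMem _, indicator_of_notMem hv]
        intro hvS; exact hv ⟨hvS.2.1, hvS.2.2⟩
    calc ∫ v in σ..τ, F v σ = ∫ v in Ioc σ τ, F v σ := intervalIntegral.integral_of_le hσ.2
      _ = ∫ v in Ioc 0 τ, (Ioc σ τ).indicator (fun v => F v σ) v := by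
          rw [setIntegral_indicator measurableSet_Ioc,
            Set.inter_eq_right.mpr (Ioc_subset_Ioc_left hσ.1.le)]
      _ = ∫ v, u (σ, v) ∂μ := by
          rw [hμ]
          exact setIntegral_congr_fun measurableSet_Ioc fun v _ => (h1 v).symm
  have hR : (∫ v in (0:ℝ)..τ, ∫ σ in (0:ℝ)..v, F v σ) = ∫ v, (∫ σ, u (σ, v) ∂μ) ∂μ := by
    rw [intervalIntegral.integral_of_le hτ, hμ]
    refine setIntegral_congr_fun measurableSet_Ioc fun v hv => ?_
    have h1 : ∀ σ, u (σ, v) = (Ioo 0 v).indicator (fun σ => F v σ) σ := by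
      intro σ
      rw [hu]
      by_cases hσ : σ ∈ Ioo 0 v
      · rw [indicator_of_mem _, indicator_of_mem hσ]; exact ⟨hσ.1, hσ.2, hv.2⟩
      · rw [indicator_of_notMem _, indicator_of_notMem hσ]
        intro h; exact hσ ⟨h.1, h.2.1⟩
    calc ∫ σ in (0:ℝ)..v, F v σ = ∫ σ in Ioc 0 v, F v σ := intervalIntegral.integral_of_le hv.1.le
      _ = ∫ σ in Ioo 0 v, F v σ := integral_Ioc_eq_integral_Ioo
      _ = ∫ σ in Ioc 0 τ, (Ioo 0 v).indicator (fun σ => F v σ) σ := by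
          rw [setIntegral_indicator measurableSet_Ioo,
            Set.inter_eq_right.mpr (show Ioo 0 v ⊆ Ioc 0 τ from fun x hx => ⟨hx.1, hx.2.le.trans hv.2⟩)]
      _ = ∫ σ, u (σ, v) ∂μ := by
          rw [hμ]
          exact setIntegral_congr_fun measurableSet_Ioc fun σ _ => (h1 σ).symm
  rw [hL, hR]
  exact hswap

lemma aux_key {E : Type*} [NormedAddCommGroup E] [NormedSpace ℝ E]
    (Tt : ℝ → E →L[ℝ] E) {t M : ℝ} (hM : ∀ s ∈ Icc (0:ℝ) t, ‖Tt s‖ ≤ M)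
    (hTcont : ∀ x : E, ContinuousOn (fun s => Tt s x) (Ici 0))
    {f : ℝ → E} {f' : E} {τ : ℝ} (hτ : τ ∈ Icc (0:ℝ) t)
    (hf : HasDerivWithinAt f f' (Icc 0 t) τ) :
    HasDerivWithinAt (fun s => Tt (t - s) (f s - f τ)) (Tt (t - τ) f') (Icc 0 t) τ := by
  have hmemsub : ∀ s ∈ Icc (0:ℝ) t, t - s ∈ Icc (0:ℝ) t := fun s hs =>
    ⟨sub_nonneg.2 hs.2, sub_le_self t hs.1⟩
  rw [hasDerivWithinAt_iff_isLittleO]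
  have h1 : (fun s => Tt (t - s) (f s - f τ - (s - τ) • f')) =o[𝓝[Icc 0 t] τ]
      fun s => s - τ := by
    have hO : (fun s => Tt (t - s) (f s - f τ - (s - τ) • f')) =O[𝓝[Icc 0 t] τ]
        (fun s => f s - f τ - (s - τ) • f') := by
      apply Asymptotics.IsBigO.of_bound M
      filter_upwards [self_mem_nhdsWithin] with s hs
      calc ‖Tt (t - s) (f s - f τ - (s - τ) • f')‖
          ≤ ‖Tt (t - s)‖ * ‖f s - f τ - (s - τ) • f'‖ := (Tt (t - s)).le_opNorm _
        _ ≤ M * ‖f s - f τ - (s - τ) • f'‖ :=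
            mul_le_mul_of_nonneg_right (hM _ (hmemsub s hs)) (norm_nonneg _)
    exact hO.trans_isLittleO (hasDerivWithinAt_iff_isLittleO.1 hf)
  have hc : Tendsto (fun s => Tt (t - s) f' - Tt (t - τ) f') (𝓝[Icc 0 t] τ) (𝓝 0) := by
    have hmap : Tendsto (fun s : ℝ => t - s) (𝓝[Icc 0 t] τ) (𝓝[Ici 0] (t - τ)) :=
      ((continuous_const.sub continuous_id).continuousWithinAt).tendsto_nhdsWithin
        (fun s hs => (hmemsub s hs).1)
    have h := ((hTcont f' (t - τ) (hmemsub τ hτ).1).tendsto.comp hmap).sub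
      (tendsto_const_nhds (x := Tt (t - τ) f'))
    simpa using h
  have h2 : (fun s => (s - τ) • (Tt (t - s) f' - Tt (t - τ) f')) =o[𝓝[Icc 0 t] τ]
      fun s => s - τ := by
    rw [Asymptotics.isLittleO_iff]
    intro c hc0
    filter_upwards [Metric.tendsto_nhds.mp hc c hc0] with s hs
    rw [norm_smul, dist_zero_right] at *
    calc ‖s - τ‖ * ‖Tt (t - s) f' - Tt (t - τ) f'‖ ≤ ‖s - τ‖ * c :=
          mul_le_mul_of_nonneg_left hs.le (norm_nonneg _)
      _ = c * ‖s - τ‖ := mul_comm _ _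
  have heqfun : ∀ s, Tt (t - s) (f s - f τ - (s - τ) • f')
      + (s - τ) • (Tt (t - s) f' - Tt (t - τ) f')
      = Tt (t - s) (f s - f τ) - Tt (t - τ) (f τ - f τ) - (s - τ) • Tt (t - τ) f' := by
    intro s
    simp only [map_sub, _root_.map_smul, smul_sub, sub_self, map_zero]
    abel
  exact ((h1.add h2).congr' (Filter.Eventually.of_forall heqfun) EventuallyEq.rfl)

lemma aux_contT {E : Type*} [NormedAddCommGroup E] [NormedSpace ℝ E]
    (Tt : ℝ → E →L[ℝ] E) {t M : ℝ} (hM : ∀ s ∈ Icc (0:ℝ) t, ‖Tt s‖ ≤ M)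
    (hTcont : ∀ x : E, ContinuousOn (fun s => Tt s x) (Ici 0))
    {v : ℝ → E} (hv : Continuous v) :
    ContinuousOn (fun τ => Tt (t - τ) (v τ)) (Icc 0 t) := by
  intro τ₀ hτ₀
  have hmemsub : ∀ s ∈ Icc (0:ℝ) t, t - s ∈ Icc (0:ℝ) t := fun s hs =>
    ⟨sub_nonneg.2 hs.2, sub_le_self t hs.1⟩
  have h2 : ContinuousWithinAt (fun τ => Tt (t - τ) (v τ₀)) (Icc 0 t) τ₀ :=
    (hTcont (v τ₀) (t - τ₀) (hmemsub τ₀ hτ₀).1).comp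
      ((continuous_const.sub continuous_id).continuousWithinAt) (fun s hs => (hmemsub s hs).1)
  have h1 : Tendsto (fun τ => Tt (t - τ) (v τ - v τ₀)) (𝓝[Icc 0 t] τ₀) (𝓝 0) := by
    have hb : ∀ᶠ s in 𝓝[Icc 0 t] τ₀,
        ‖Tt (t - s) (v s - v τ₀)‖ ≤ max M 0 * ‖v s - v τ₀‖ := by
      filter_upwards [self_mem_nhdsWithin] with s hs
      calc ‖Tt (t - s) (v s - v τ₀)‖ ≤ ‖Tt (t - s)‖ * ‖v s - v τ₀‖ :=
            (Tt (t - s)).le_opNorm _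
        _ ≤ max M 0 * ‖v s - v τ₀‖ :=
            mul_le_mul_of_nonneg_right (le_max_of_le_left (hM _ (hmemsub s hs))) (norm_nonneg _)
    have hv0 : Tendsto (fun τ => v τ - v τ₀) (𝓝[Icc 0 t] τ₀) (𝓝 0) := by
      have hvt : Tendsto v (𝓝[Icc 0 t] τ₀) (𝓝 (v τ₀)) :=
        (hv.tendsto τ₀).mono_left nhdsWithin_le_nhds
      have := hvt.sub (tendsto_const_nhds (x := v τ₀))
      simpa using this
    have hg : Tendsto (fun τ => max M 0 * ‖v τ - v τ₀‖) (𝓝[Icc 0 t] τ₀) (𝓝 0) := by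
      have := (hv0.norm).const_mul (max M 0)
      simpa using this
    exact squeeze_zero_norm' hb hg
  have heqf : ∀ τ, Tt (t - τ) (v τ - v τ₀) + Tt (t - τ) (v τ₀) = Tt (t - τ) (v τ) := by
    intro τ; rw [← map_add]; congr 1; abel
  have hsum := h1.add h2
  rw [zero_add] at hsum
  exact Filter.Tendsto.congr heqf hsum

open intervalIntegral in
theorem stmt_8 {H : Type*} [NormedAddCommGroup H] [InnerProductSpace ℝ H]
    [TopologicalSpace.SeparableSpace H] [CompleteSpace H]
    (D : Submodule ℝ H) (A : H → H)
    (hA_add : ∀ x ∈ D, ∀ y ∈ D, A (x + y) = A x + A y)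
    (hA_smul : ∀ (c : ℝ), ∀ x ∈ D, A (c • x) = c • A x)
    (Tt : ℝ → H →L[ℝ] H)
    (hT0 : Tt 0 = ContinuousLinearMap.id ℝ H)
    (hTsemi : ∀ s ≥ (0:ℝ), ∀ t ≥ (0:ℝ), Tt (t + s) = (Tt t).comp (Tt s))
    (hTcont : ∀ x : H, ContinuousOn (fun t => Tt t x) (Ici 0))
    (hTD : ∀ x ∈ D, ∀ t ≥ (0:ℝ), Tt t x ∈ D ∧
      HasDerivWithinAt (fun τ => Tt τ x) (Tt t (A x)) (Ici 0) t)
    (T₀ : ℝ) (hT₀ : 0 < T₀)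
    (a a' : ℝ → ℝ)
    (ha : ∀ t ∈ Icc (0:ℝ) T₀, HasDerivWithinAt a (a' t) (Icc 0 T₀) t)
    (ha' : ContinuousOn a' (Icc 0 T₀)) (ha0 : a 0 = 1)
    (w : ℝ → H) (hw : ContinuousOn w (Icc 0 T₀))
    (X : ℝ → H) (hX : ContinuousOn X (Icc 0 T₀))
    (heq : ∀ t ∈ Icc (0:ℝ) T₀,
      (∫ τ in (0:ℝ)..t, a (t - τ) • X τ) ∈ D ∧
      X t = A (∫ τ in (0:ℝ)..t, a (t - τ) • X τ) + w t) :
    ∀ t ∈ Icc (0:ℝ) T₀,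
      (∫ τ in (0:ℝ)..t,
          Tt (t - τ) ((∫ σ in (0:ℝ)..τ, a' (τ - σ) • X σ) + w τ)) ∈ D ∧
      X t = A (∫ τ in (0:ℝ)..t,
          Tt (t - τ) ((∫ σ in (0:ℝ)..τ, a' (τ - σ) • X σ) + w τ)) + w t := by
  -- continuous extensions of `a'`, `X`, `w` outside `[0, T₀]`
  set p : ℝ → ℝ := fun s => min (max s 0) T₀ with hp
  have hpmem : ∀ s, p s ∈ Icc (0:ℝ) T₀ := fun s =>
    ⟨le_min (le_max_right s 0) hT₀.le, min_le_right _ _⟩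
  have hpeq : ∀ s ∈ Icc (0:ℝ) T₀, p s = s := by
    intro s hs
    rw [hp]
    simp only [max_eq_left hs.1, min_eq_left hs.2]
  have hpc : Continuous p := (continuous_id.max continuous_const).min continuous_const
  set Xe : ℝ → H := fun s => X (p s) with hXedef
  set ae : ℝ → ℝ := fun s => a' (p s) with haedef
  set we : ℝ → H := fun s => w (p s) with hwedef
  have hXe : Continuous Xe := hX.comp_continuous hpc hpmem
  have hae : Continuous ae := ha'.comp_continuous hpc hpmem
  have hwe : Continuous we := hw.comp_continuous hpc hpmem
  set G : ℝ → H := fun u => ∫ σ in (0:ℝ)..u, ae (u - σ) • Xe σ with hGdef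
  have hFc : Continuous (Function.uncurry fun u σ => ae (u - σ) • Xe σ) :=
    (hae.comp (continuous_fst.sub continuous_snd)).smul (hXe.comp continuous_snd)
  have hGc : Continuous G :=
    intervalIntegral.continuous_parametric_intervalIntegral_of_continuous hFc continuous_id
  set Z : ℝ → H := fun τ => ∫ σ in (0:ℝ)..τ, a (τ - σ) • X σ with hZdef
  -- FTC for a
  have haFTC : ∀ r ∈ Icc (0:ℝ) T₀, a r = 1 + ∫ u in (0:ℝ)..r, ae u := by
    intro r hr
    have hcont : ContinuousOn a (Icc 0 r) := fun x hx =>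
      ((ha x ⟨hx.1, hx.2.trans hr.2⟩).continuousWithinAt).mono (Icc_subset_Icc le_rfl hr.2)
    have hder : ∀ x ∈ Ioo (0:ℝ) r, HasDerivWithinAt a (ae x) (Ioi x) x := by
      intro x hx
      have hx' : x ∈ Icc (0:ℝ) T₀ := ⟨hx.1.le, hx.2.le.trans hr.2⟩
      have hnb : Icc (0:ℝ) T₀ ∈ 𝓝 x := Icc_mem_nhds hx.1 (lt_of_lt_of_le hx.2 hr.2)
      have hda : HasDerivAt a (a' x) x := (ha x hx').hasDerivAt hnb
      have : ae x = a' x := by rw [haedef]; simp only []; rw [hpeq x hx']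
      rw [this]
      exact hda.hasDerivWithinAt
    have hint : IntervalIntegrable ae volume 0 r := hae.intervalIntegrable _ _
    have hF := intervalIntegral.integral_eq_sub_of_hasDeriv_right_of_le hr.1 hcont hder hint
    rw [ha0] at hF
    linarith
  -- key identity : Z equals a primitive
  have hZP : ∀ τ ∈ Icc (0:ℝ) T₀, Z τ = ∫ σ in (0:ℝ)..τ, (Xe σ + G σ) := by
    intro τ hτ
    have hτ0 : (0:ℝ) ≤ τ := hτ.1
    have hstep1 : Z τ = ∫ σ in (0:ℝ)..τ, (Xe σ + ∫ v in σ..τ, ae (v - σ) • Xe σ) := by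
      rw [hZdef]
      apply intervalIntegral.integral_congr
      rw [uIcc_of_le hτ0]
      intro σ hσ
      have hσT : σ ∈ Icc (0:ℝ) T₀ := ⟨hσ.1, hσ.2.trans hτ.2⟩
      have hτσ : τ - σ ∈ Icc (0:ℝ) T₀ := ⟨sub_nonneg.2 hσ.2, by
        have := hτ.2; have := hσ.1; linarith⟩
      have h2 : X σ = Xe σ := by rw [hXedef]; simp only []; rw [hpeq σ hσT]
      simp only []
      rw [haFTC _ hτσ, h2, add_smul, one_smul]
      congr 1
      rw [← intervalIntegral.integral_smul_const]
      have h3 := intervalIntegral.integral_comp_sub_right (a := σ) (b := τ)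
        (fun r => ae r • Xe σ) σ
      rw [sub_self] at h3
      exact h3.symm
    have hFv : ∀ σ : ℝ, Continuous fun v => ae (v - σ) • Xe σ := fun σ =>
      (hae.comp (continuous_sub_right σ)).smul continuous_const
    have hsplit : ∀ σ : ℝ, (∫ v in σ..τ, ae (v - σ) • Xe σ)
        = (∫ v in (0:ℝ)..τ, ae (v - σ) • Xe σ) - ∫ v in (0:ℝ)..σ, ae (v - σ) • Xe σ :=
      fun σ => (intervalIntegral.integral_interval_sub_left
        ((hFv σ).intervalIntegrable _ _) ((hFv σ).intervalIntegrable _ _)).symm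
    have hFc2 : Continuous (Function.uncurry fun σ v => ae (v - σ) • Xe σ) :=
      (hae.comp (continuous_snd.sub continuous_fst)).smul (hXe.comp continuous_fst)
    have hc1 : Continuous fun σ : ℝ => ∫ v in (0:ℝ)..τ, ae (v - σ) • Xe σ :=
      intervalIntegral.continuous_parametric_intervalIntegral_of_continuous' hFc2 0 τ
    have hc2 : Continuous fun σ : ℝ => ∫ v in (0:ℝ)..σ, ae (v - σ) • Xe σ :=
      intervalIntegral.continuous_parametric_intervalIntegral_of_continuous hFc2 continuous_id
    have hic : Continuous fun σ => ∫ v in σ..τ, ae (v - σ) • Xe σ := by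
      have : (fun σ => ∫ v in σ..τ, ae (v - σ) • Xe σ)
          = fun σ => (∫ v in (0:ℝ)..τ, ae (v - σ) • Xe σ) - ∫ v in (0:ℝ)..σ, ae (v - σ) • Xe σ :=
        funext hsplit
      rw [this]
      exact hc1.sub hc2
    have hadd : (∫ σ in (0:ℝ)..τ, (Xe σ + ∫ v in σ..τ, ae (v - σ) • Xe σ))
        = (∫ σ in (0:ℝ)..τ, Xe σ) + ∫ σ in (0:ℝ)..τ, ∫ v in σ..τ, ae (v - σ) • Xe σ :=
      intervalIntegral.integral_add (hXe.intervalIntegrable _ _) (hic.intervalIntegrable _ _)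
    have hfub := aux_fubini_triangle (fun v σ => ae (v - σ) • Xe σ) hFc hτ0
    have hadd2 : (∫ σ in (0:ℝ)..τ, Xe σ) + (∫ v in (0:ℝ)..τ, G v)
        = ∫ σ in (0:ℝ)..τ, (Xe σ + G σ) :=
      (intervalIntegral.integral_add (hXe.intervalIntegrable _ _)
        (hGc.intervalIntegrable _ _)).symm
    rw [hstep1, hadd, hfub]
    exact hadd2
  -- derivative of the primitive
  have hPd : ∀ τ : ℝ, HasDerivAt (fun u => ∫ σ in (0:ℝ)..u, (Xe σ + G σ)) (Xe τ + G τ) τ := by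
    intro τ
    have hc : Continuous fun σ => Xe σ + G σ := hXe.add hGc
    exact intervalIntegral.integral_hasDerivAt_right (hc.intervalIntegrable _ _)
      (hc.stronglyMeasurable.stronglyMeasurableAtFilter) hc.continuousAt
  intro t ht
  obtain ⟨ht0, htT⟩ := ht
  have hIccsub : Icc (0:ℝ) t ⊆ Icc (0:ℝ) T₀ := Icc_subset_Icc le_rfl htT
  -- uniform bound on the semigroup on [0, t]
  have hbdd : ∀ x : H, ∃ C, ∀ s : Icc (0:ℝ) t, ‖Tt s x‖ ≤ C := by
    intro x
    obtain ⟨C, hC⟩ := isCompact_Icc.exists_bound_of_continuousOn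
      ((hTcont x).mono (fun s hs => hs.1 : Icc (0:ℝ) t ⊆ Ici 0))
    exact ⟨C, fun s => hC s s.2⟩
  obtain ⟨M, hM'⟩ := banach_steinhaus (g := fun s : Icc (0:ℝ) t => Tt s) hbdd
  have hM : ∀ s ∈ Icc (0:ℝ) t, ‖Tt s‖ ≤ M := fun s hs => hM' ⟨s, hs⟩
  -- derivative of τ ↦ Tt (t - τ) (Z τ)
  have hder : ∀ τ ∈ Icc (0:ℝ) t, HasDerivWithinAt (fun s => Tt (t - s) (Z s))
      (Tt (t - τ) (G τ + we τ)) (Icc 0 t) τ := by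
    intro τ hτ
    have hτT : τ ∈ Icc (0:ℝ) T₀ := hIccsub hτ
    have hZmem : Z τ ∈ D := (heq τ hτT).1
    have hZder : HasDerivWithinAt Z (Xe τ + G τ) (Icc 0 t) τ :=
      ((hPd τ).hasDerivWithinAt).congr (fun u hu => hZP u (hIccsub hu)) (hZP τ hτT)
    have d1 := aux_key Tt hM hTcont hτ hZder
    have hTDτ := hTD (Z τ) hZmem (t - τ) (sub_nonneg.2 hτ.2)
    have hneg : HasDerivWithinAt (fun s : ℝ => t - s) (-1) (Icc 0 t) τ := by
      simpa using (hasDerivWithinAt_id τ (Icc (0:ℝ) t)).const_sub t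
    have d2 : HasDerivWithinAt ((fun s => Tt s (Z τ)) ∘ fun s : ℝ => t - s)
        ((-1 : ℝ) • Tt (t - τ) (A (Z τ))) (Icc 0 t) τ :=
      HasDerivWithinAt.scomp τ hTDτ.2 hneg (fun s hs => sub_nonneg.2 hs.2)
    have d3 := d1.add d2
    have hAZ : A (Z τ) = X τ - w τ := by
      have h := (heq τ hτT).2
      rw [h]; abel
    have hXτ : Xe τ = X τ := by rw [hXedef]; simp only []; rw [hpeq τ hτT]
    have hwτ : we τ = w τ := by rw [hwedef]; simp only []; rw [hpeq τ hτT]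
    have hvals : Tt (t - τ) (Xe τ + G τ) + (-1:ℝ) • Tt (t - τ) (A (Z τ))
        = Tt (t - τ) (G τ + we τ) := by
      rw [hAZ, neg_one_smul, ← sub_eq_add_neg, ← map_sub]
      congr 1
      rw [hXτ, hwτ]
      abel
    rw [hvals] at d3
    refine d3.congr (fun s hs => ?_) ?_
    · show Tt (t - s) (Z s) = Tt (t - s) (Z s - Z τ) + Tt (t - s) (Z τ)
      rw [← map_add]
      congr 1
      abel
    · show Tt (t - τ) (Z τ) = Tt (t - τ) (Z τ - Z τ) + Tt (t - τ) (Z τ)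
      rw [← map_add]
      congr 1
      abel
  -- FTC on [0, t]
  have hφcont : ContinuousOn (fun τ => Tt (t - τ) (G τ + we τ)) (Icc 0 t) :=
    aux_contT Tt hM hTcont (hGc.add hwe)
  have hφint : IntervalIntegrable (fun τ => Tt (t - τ) (G τ + we τ)) volume 0 t := by
    apply ContinuousOn.intervalIntegrable
    rw [uIcc_of_le ht0]
    exact hφcont
  have hFTC := intervalIntegral.integral_eq_sub_of_hasDeriv_right_of_le ht0
    (fun τ hτ => (hder τ hτ).continuousWithinAt)
    (fun τ hτ => (((hder τ ⟨hτ.1.le, hτ.2.le⟩).hasDerivAt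
      (Icc_mem_nhds hτ.1 hτ.2)).hasDerivWithinAt))
    hφint
  have hgt : Tt (t - t) (Z t) = Z t := by rw [sub_self, hT0]; rfl
  have hg0 : Tt (t - 0) (Z 0) = 0 := by
    have hZ0 : Z 0 = 0 := intervalIntegral.integral_same
    rw [hZ0, map_zero]
  rw [hgt, hg0, sub_zero] at hFTC
  have hYeq : (∫ τ in (0:ℝ)..t, Tt (t - τ) ((∫ σ in (0:ℝ)..τ, a' (τ - σ) • X σ) + w τ))
      = ∫ τ in (0:ℝ)..t, Tt (t - τ) (G τ + we τ) := by
    apply intervalIntegral.integral_congr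
    rw [uIcc_of_le ht0]
    intro τ hτ
    have hτT : τ ∈ Icc (0:ℝ) T₀ := hIccsub hτ
    have hinner : (∫ σ in (0:ℝ)..τ, a' (τ - σ) • X σ) = G τ := by
      rw [hGdef]
      apply intervalIntegral.integral_congr
      rw [uIcc_of_le hτ.1]
      intro σ hσ
      have h1 : τ - σ ∈ Icc (0:ℝ) T₀ := ⟨sub_nonneg.2 hσ.2, by
        have := hτT.2; have := hσ.1; linarith⟩
      have h2 : σ ∈ Icc (0:ℝ) T₀ := ⟨hσ.1, hσ.2.trans hτT.2⟩
      show a' (τ - σ) • X σ = a' (p (τ - σ)) • X (p σ)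
      rw [hpeq _ h1, hpeq _ h2]
    have hwτ : we τ = w τ := by rw [hwedef]; simp only []; rw [hpeq τ hτT]
    simp only []
    rw [hinner, hwτ]
  rw [hYeq, hFTC]
  exact heq t ⟨ht0, htT⟩
end
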